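/- Let (g_n) be a sequence of isometries of an α-almost geodesic, δ-hyperbolic separable metric space (X,d). Let ξ ∈ ∂X and suppose there exist two distinct points ξ₁ ≠ ξ₂ ∈ ∂X such that for every neighbourhood U of ξ in the Gromov bordification there exists n₀ with g_nξ₁ ∈ U and g_nξ₂ ∈ U for all n ≥ n₀. Then for every o ∈ X, g_n o → ξ in the Gromov bordification. -/

import Mathlib

/-!
Represent ξ₁, ξ₂ by sequences u₁, u₂. As ξ₁ ≠ ξ₂, `(u₁ᵢ | u₂ᵢ)_{o'} ≤ C` for infinitely many `i`.
If both `g ξ₁` and `g ξ₂` are `R`-close to ξ, then `(g u₁ᵢ | g u₂ᵢ)_o ≳ R` eventually, i.e.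
`(u₁ᵢ | u₂ᵢ)_p ≳ R` for `p = g⁻¹ o`, which forces `d(o', p) ≳ R - C`. By hyperbolicity `p` has
small Gromov product at `o'` with one of the `uⱼ`, so `(uⱼᵢ | o')_p = d(o', p) - (uⱼᵢ | p)_{o'} ≳ R`:
translated by `g`, the point `g o'` lies in the shadow of `g uⱼᵢ` seen from `o`, and hence
`(ξ | g o')_o ≳ R`.
-/

open Filter Set

namespace Stmt19

variable {X : Type*} [MetricSpace X]

/-- The Gromov product `(x|y)_o`. -/
noncomputable def gp (o x y : X) : ℝ := (dist x o + dist y o - dist x y) / 2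

/-- `X` is `δ`-hyperbolic. -/
def IsGromovHyperbolicWith (X : Type*) [MetricSpace X] (δ : ℝ) : Prop :=
  ∀ o x y z : X, min (gp o x z) (gp o z y) - δ ≤ gp o x y

/-- `X` is `α`-almost geodesic. -/
def IsAlmostGeodesicWith (X : Type*) [MetricSpace X] (α : ℝ) : Prop :=
  ∀ x y : X, ∀ t ∈ Icc (0 : ℝ) (dist x y), ∃ z : X,
    |dist x z - t| ≤ α ∧ |dist y z - (dist x y - t)| ≤ α

theorem gp_basechange (o o' x y : X) : gp o x y - dist o o' ≤ gp o' x y := by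
  have h1 := dist_triangle x o' o
  have h2 := dist_triangle y o' o
  have h3 : dist o' o = dist o o' := dist_comm o' o
  unfold gp
  linarith

/-- The sequence `u` converges at infinity. -/
def ConvAtInfinity (o : X) (u : ℕ → X) : Prop :=
  Tendsto (fun p : ℕ × ℕ => gp o (u p.1) (u p.2)) atTop atTop

/-- Sequences converging at infinity. -/
def BSeq (X : Type*) [MetricSpace X] (o : X) := {u : ℕ → X // ConvAtInfinity o u}

/-- Equivalence of sequences converging at infinity. -/
def bRel (o : X) (u v : BSeq X o) : Prop :=
  Tendsto (fun i => gp o (u.1 i) (v.1 i)) atTop atTop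

/-- The Gromov boundary `∂X`. -/
def GromovBoundary (X : Type*) [MetricSpace X] (o : X) := Quot (bRel (X := X) o)

section Isom

variable (e : X ≃ᵢ X) (o : X)

theorem gp_isom (x y : X) : gp o (e x) (e y) = gp (e.symm o) x y := by
  unfold gp
  have h1 : dist (e x) o = dist x (e.symm o) := by
    conv_lhs => rw [← e.apply_symm_apply o]
    rw [e.dist_eq]
  have h2 : dist (e y) o = dist y (e.symm o) := by
    conv_lhs => rw [← e.apply_symm_apply o]
    rw [e.dist_eq]
  rw [h1, h2, e.dist_eq]

theorem gp_isom_ge (x y : X) : gp o x y - dist o (e.symm o) ≤ gp o (e x) (e y) := by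
  rw [gp_isom]
  exact gp_basechange o (e.symm o) x y

theorem ConvAtInfinity.isom {o : X} {u : ℕ → X} (hu : ConvAtInfinity o u)
    (e : X ≃ᵢ X) : ConvAtInfinity o (fun i => e (u i)) := by
  refine tendsto_atTop_mono' _ ?_ (tendsto_atTop_add_const_right _ (-(dist o (e.symm o))) hu)
  filter_upwards with p
  have := gp_isom_ge e o (u p.1) (u p.2)
  simpa [sub_eq_add_neg] using this

theorem bRel.isom {o : X} {u v : BSeq X o} (h : bRel o u v) (e : X ≃ᵢ X) :
    bRel o ⟨fun i => e (u.1 i), u.2.isom e⟩ ⟨fun i => e (v.1 i), v.2.isom e⟩ := by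
  refine tendsto_atTop_mono' _ ?_ (tendsto_atTop_add_const_right _ (-(dist o (e.symm o))) h)
  filter_upwards with i
  have := gp_isom_ge e o (u.1 i) (v.1 i)
  simpa [sub_eq_add_neg] using this

/-- The induced action of an isometry of `X` on its Gromov boundary. -/
def bmap : GromovBoundary X o → GromovBoundary X o :=
  Quot.map (fun u => ⟨fun i => e (u.1 i), u.2.isom e⟩) (fun _ _ h => h.isom e)

end Isom

/-- The extended Gromov product of two boundary points,
`(ξ|η)_o = sup { liminf (uᵢ|vᵢ)_o : u ∈ ξ, v ∈ η }`. -/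
noncomputable def gpBB (o : X) (ξ η : GromovBoundary X o) : EReal :=
  ⨆ (u : {u : BSeq X o // Quot.mk _ u = ξ}) (v : {v : BSeq X o // Quot.mk _ v = η}),
    liminf (fun i => ((gp o (u.1.1 i) (v.1.1 i) : ℝ) : EReal)) atTop

/-- The extended Gromov product of a boundary point and a point of `X`,
`(ξ|x)_o = sup { liminf (uᵢ|x)_o : u ∈ ξ }`.  Convergence `xₙ → ξ` in the
Gromov bordification means `(ξ|xₙ)_o → +∞`. -/
noncomputable def gpXB (o : X) (ξ : GromovBoundary X o) (x : X) : EReal :=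
  ⨆ (u : {u : BSeq X o // Quot.mk _ u = ξ}),
    liminf (fun i => ((gp o (u.1.1 i) x : ℝ) : EReal)) atTop

theorem gp_comm (o x y : X) : gp o x y = gp o y x := by
  unfold gp; rw [dist_comm x y]; ring

theorem gp_nonneg (o x y : X) : 0 ≤ gp o x y := by
  unfold gp; linarith [dist_triangle x o y, dist_comm o y]

theorem gp_add_gp_eq_dist (p o' x : X) : gp p x o' + gp o' x p = dist o' p := by
  unfold gp; rw [dist_comm p o']; ring

namespace IsGromovHyperbolicWith

variable {δ : ℝ}

theorem nonneg (hX : IsGromovHyperbolicWith X δ) (o : X) : 0 ≤ δ := by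
  simpa [gp] using hX o o o o

theorem sub_le_gp (hX : IsGromovHyperbolicWith X δ) {o x y z : X} {R : ℝ}
    (hxz : R ≤ gp o x z) (hzy : R ≤ gp o z y) : R - δ ≤ gp o x y := by
  linarith [hX o x y z, le_min hxz hzy]

theorem gp_le_or_gp_le (hX : IsGromovHyperbolicWith X δ) {o x y : X} (z : X) {C : ℝ}
    (h : gp o x y ≤ C) : gp o x z ≤ C + δ ∨ gp o z y ≤ C + δ := by
  rw [← min_le_iff]
  linarith [hX o x y z]

end IsGromovHyperbolicWith

theorem ConvAtInfinity.change_base {o : X} {u : ℕ → X} (hu : ConvAtInfinity o u) (o' : X) :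
    ConvAtInfinity o' u :=
  tendsto_atTop_mono (fun q => by linarith [gp_basechange o o' (u q.1) (u q.2)])
    (tendsto_atTop_add_const_right _ (-dist o o') hu)

theorem ConvAtInfinity.eventually_gp_le_of_frequently {δ : ℝ} (hX : IsGromovHyperbolicWith X δ)
    {o p : X} {u : ℕ → X} (hu : ConvAtInfinity o u) {C : ℝ}
    (h : ∃ᶠ i in atTop, gp o (u i) p ≤ C) : ∀ᶠ i in atTop, gp o (u i) p ≤ C + δ := by
  obtain ⟨N, hN⟩ := eventually_atTop.1 (tendsto_atTop.1 hu (C + δ + 1))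
  obtain ⟨k, hk, hkp⟩ := frequently_atTop.1 h N.1
  filter_upwards [eventually_ge_atTop N.2] with i hi
  refine (hX.gp_le_or_gp_le (u i) hkp).resolve_left fun hki => ?_
  linarith [hN (k, i) (Prod.mk_le_mk.2 ⟨hk, hi⟩)]

theorem bRel_refl (o : X) (u : BSeq X o) : bRel o u u :=
  u.2.comp tendsto_atTop_diagonal

theorem bRel_symm {o : X} {u v : BSeq X o} (h : bRel o u v) : bRel o v u := by
  simpa only [bRel, gp_comm] using h

theorem bRel_trans {δ : ℝ} (hX : IsGromovHyperbolicWith X δ) {o : X} {u v w : BSeq X o}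
    (huv : bRel o u v) (hvw : bRel o v w) : bRel o u w := by
  refine tendsto_atTop.2 fun R => ?_
  filter_upwards [tendsto_atTop.1 huv (R + δ), tendsto_atTop.1 hvw (R + δ)] with i h₁ h₂
  simpa using hX.sub_le_gp h₁ h₂

theorem mk_eq_mk_iff {δ : ℝ} (hX : IsGromovHyperbolicWith X δ) {o : X} {u v : BSeq X o} :
    Quot.mk (bRel o) u = Quot.mk (bRel o) v ↔ bRel o u v := by
  rw [Quot.eq]
  exact Equivalence.eqvGen_iff ⟨bRel_refl o, bRel_symm, bRel_trans hX⟩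

theorem exists_frequently_gp_le_of_mk_ne {o : X} {u v : BSeq X o}
    (h : Quot.mk (bRel o) u ≠ Quot.mk (bRel o) v) (o' : X) :
    ∃ C, ∃ᶠ i in atTop, gp o' (u.1 i) (v.1 i) ≤ C := by
  obtain ⟨C, hC⟩ : ∃ C, ∃ᶠ i in atTop, gp o (u.1 i) (v.1 i) < C := by
    by_contra! hcon
    exact h (Quot.sound (tendsto_atTop.2 hcon))
  exact ⟨C + dist o' o, hC.mono fun i hi => by linarith [gp_basechange o' o (u.1 i) (v.1 i)]⟩

theorem exists_eventually_sub_le_gp_of_lt_gpBB {δ : ℝ} (hX : IsGromovHyperbolicWith X δ)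
    {o : X} {ξ : GromovBoundary X o} {u : BSeq X o} {R : ℝ}
    (h : (R : EReal) < gpBB o ξ (Quot.mk _ u)) :
    ∃ w : {w : BSeq X o // Quot.mk _ w = ξ}, ∀ᶠ i in atTop, R - δ ≤ gp o (w.1.1 i) (u.1 i) := by
  obtain ⟨w, h⟩ := lt_iSup_iff.1 h
  obtain ⟨v, h⟩ := lt_iSup_iff.1 h
  refine ⟨w, ?_⟩
  filter_upwards [eventually_lt_of_lt_liminf h, tendsto_atTop.1 ((mk_eq_mk_iff hX).1 v.2) R]
    with i hwv hvu
  exact hX.sub_le_gp (EReal.coe_lt_coe_iff.1 hwv).le hvu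

theorem le_gpXB_of_eventually {o x : X} {ξ : GromovBoundary X o}
    (w : {w : BSeq X o // Quot.mk _ w = ξ}) {R : ℝ} (h : ∀ᶠ i in atTop, R ≤ gp o (w.1.1 i) x) :
    (R : EReal) ≤ gpXB o ξ x :=
  (le_liminf_of_le (by isBoundedDefault) (h.mono fun _ hi => EReal.coe_le_coe_iff.2 hi)).trans
    (le_iSup (fun w : {w : BSeq X o // Quot.mk _ w = ξ} =>
      liminf (fun i => ((gp o (w.1.1 i) x : ℝ) : EReal)) atTop) w)

theorem le_gpXB_of_frequently_gp_le {δ : ℝ} (hX : IsGromovHyperbolicWith X δ) (e : X ≃ᵢ X)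
    {o o' : X} {ξ : GromovBoundary X o} (w : {w : BSeq X o // Quot.mk _ w = ξ}) (u : BSeq X o)
    {R C : ℝ} (hw : ∀ᶠ i in atTop, R + δ ≤ gp o (w.1.1 i) (e (u.1 i)))
    (hu : ∃ᶠ i in atTop, gp o' (u.1 i) (e.symm o) ≤ C)
    (hdist : R + C + 2 * δ ≤ dist o' (e.symm o)) :
    (R : EReal) ≤ gpXB o ξ (e o') := by
  refine le_gpXB_of_eventually w ?_
  filter_upwards [hw, (u.2.change_base o').eventually_gp_le_of_frequently hX hu] with i hwu hup
  have hshadow : R + δ ≤ gp o (e (u.1 i)) (e o') := by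
    rw [gp_isom]
    linarith [gp_add_gp_eq_dist (e.symm o) o' (u.1 i)]
  simpa using hX.sub_le_gp hwu hshadow

theorem le_gpXB_of_lt_gpBB {δ : ℝ} (hX : IsGromovHyperbolicWith X δ) (e : X ≃ᵢ X)
    {o o' : X} {ξ : GromovBoundary X o} {u₁ u₂ : BSeq X o} {R C : ℝ}
    (hC : ∃ᶠ i in atTop, gp o' (u₁.1 i) (u₂.1 i) ≤ C)
    (h₁ : ((R + 6 * δ + 2 * C : ℝ) : EReal) < gpBB o ξ (bmap e o (Quot.mk _ u₁)))
    (h₂ : ((R + 6 * δ + 2 * C : ℝ) : EReal) < gpBB o ξ (bmap e o (Quot.mk _ u₂))) :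
    (R : EReal) ≤ gpXB o ξ (e o') := by
  have hδ : 0 ≤ δ := hX.nonneg o
  have hC₀ : 0 ≤ C := by
    obtain ⟨i, hi⟩ := hC.exists
    exact (gp_nonneg _ _ _).trans hi
  obtain ⟨w₁, hw₁⟩ := exists_eventually_sub_le_gp_of_lt_gpBB hX h₁
  obtain ⟨w₂, hw₂⟩ := exists_eventually_sub_le_gp_of_lt_gpBB hX h₂
  have hww : bRel o w₁.1 w₂.1 := (mk_eq_mk_iff hX).1 (w₁.2.trans w₂.2.symm)
  have hfar : ∀ᶠ i in atTop, R + 3 * δ + 2 * C ≤ gp (e.symm o) (u₁.1 i) (u₂.1 i) := by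
    filter_upwards [hw₁, hw₂, tendsto_atTop.1 hww (R + 6 * δ + 2 * C)] with i hi₁ hi₂ hi
    have hw₁u₂ : R + 5 * δ + 2 * C - δ ≤ gp o (w₁.1.1 i) (e (u₂.1 i)) :=
      hX.sub_le_gp (z := w₂.1.1 i) (by linarith) (by linarith)
    have hu₁w₁ : R + 4 * δ + 2 * C ≤ gp o (e (u₁.1 i)) (w₁.1.1 i) := by rw [gp_comm]; linarith
    rw [← gp_isom]
    linarith [hX.sub_le_gp hu₁w₁ (by linarith : R + 4 * δ + 2 * C ≤ _)]
  have hdist : R + 3 * δ + C ≤ dist o' (e.symm o) := by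
    obtain ⟨i, hi, hfar_i⟩ := (hC.and_eventually hfar).exists
    linarith [gp_basechange (e.symm o) o' (u₁.1 i) (u₂.1 i), dist_comm o' (e.symm o)]
  rcases frequently_or_distrib.1 (hC.mono fun i hi => hX.gp_le_or_gp_le (e.symm o) hi)
    with hfreq | hfreq
  · exact le_gpXB_of_frequently_gp_le hX e w₁ u₁ (hw₁.mono fun i hi => by linarith) hfreq
      (by linarith)
  · exact le_gpXB_of_frequently_gp_le hX e w₂ u₂ (hw₂.mono fun i hi => by linarith)
      (hfreq.mono fun i hi => by rwa [gp_comm]) (by linarith)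

theorem orbit_convergence_of_two_boundary_points_general
    (δ : ℝ)
    (hhyp : IsGromovHyperbolicWith X δ)
    (g : ℕ → X ≃ᵢ X) (o : X) (ξ ξ₁ ξ₂ : GromovBoundary X o) (hne : ξ₁ ≠ ξ₂)
    (h1 : Tendsto (fun n => gpBB o ξ (bmap (g n) o ξ₁)) atTop (nhds (⊤ : EReal)))
    (h2 : Tendsto (fun n => gpBB o ξ (bmap (g n) o ξ₂)) atTop (nhds (⊤ : EReal))) :
    ∀ o' : X, Tendsto (fun n => gpXB o ξ (g n o')) atTop (nhds (⊤ : EReal)) := by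
  intro o'
  obtain ⟨u₁, rfl⟩ := Quot.exists_rep ξ₁
  obtain ⟨u₂, rfl⟩ := Quot.exists_rep ξ₂
  obtain ⟨C, hC⟩ := exists_frequently_gp_le_of_mk_ne hne o'
  rw [EReal.tendsto_nhds_top_iff_real] at h1 h2 ⊢
  intro T
  filter_upwards [h1 (T + 1 + 6 * δ + 2 * C), h2 (T + 1 + 6 * δ + 2 * C)] with n hn₁ hn₂
  exact (EReal.coe_lt_coe_iff.2 (lt_add_one T)).trans_le
    (le_gpXB_of_lt_gpBB hhyp (g n) hC hn₁ hn₂)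

/-- **Contraction of two boundary points forces convergence of orbits**
(Proposition `prop contraction shadow` of the paper). -/
theorem orbit_convergence_of_two_boundary_points
    (δ α : ℝ) (hδ : 0 ≤ δ) (hα : 0 ≤ α) [TopologicalSpace.SeparableSpace X]
    (hhyp : IsGromovHyperbolicWith X δ) (hgeo : IsAlmostGeodesicWith X α)
    (g : ℕ → X ≃ᵢ X) (o : X) (ξ ξ₁ ξ₂ : GromovBoundary X o) (hne : ξ₁ ≠ ξ₂)
    (h1 : Tendsto (fun n => gpBB o ξ (bmap (g n) o ξ₁)) atTop (nhds (⊤ : EReal)))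
    (h2 : Tendsto (fun n => gpBB o ξ (bmap (g n) o ξ₂)) atTop (nhds (⊤ : EReal))) :
    ∀ o' : X, Tendsto (fun n => gpXB o ξ (g n o')) atTop (nhds (⊤ : EReal)) :=
  orbit_convergence_of_two_boundary_points_general δ hhyp g o ξ ξ₁ ξ₂ hne h1 h2

end Stmt19
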